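/- arXiv:1409.8088 — 2 statements merged into one kernel-verified Lean document; each statement's English description precedes it below -/
import Mathlib

section
/- For every y>0 and every measurable function F:ℝ→ℂ, one has the identity (as an equality in [0,∞]): ∫_ℝ |ξ|^{-1/2}·|F(yξ+|ξ|^{1/2})|² dξ = ∫_ℝ |F(ζ)|²·(1/4 + y|ζ|)^{-1/2} dζ + 2·∫_0^{1/(4y)} |F(ζ)|²·(1/4 − yζ)^{-1/2} dζ. -/
/-!
Substituting `ξ = u²` and `ξ = -u²` turns the left side into
`2 ∫_{u>0} |F(u + y u²)|² du + 2 ∫_{u>0} |F(u - y u²)|² du`.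
Since `1/4 ± y (u ± y u²) = (1/2 ± y u)²`, the Jacobian of `ζ = u ± y u²` is
`2 (1/4 ± y ζ)^{1/2}`, which produces the weights `(1/4 ± y ζ)^{-1/2}`.
The map `u ↦ u + y u²` is a bijection of `(0, ∞)`, whereas `u ↦ u - y u²` folds `(0, ∞)` at
`u = 1/(2y)` onto `(-∞, 1/(4y))`, covering `(0, 1/(4y))` twice: hence the second term.
-/

open MeasureTheory Real
open scoped ENNReal NNReal
open Set

section IntervalSplitting

variable {α : Type*} [LinearOrder α] [MeasurableSpace α] [TopologicalSpace α]
  [OrderClosedTopology α] [OpensMeasurableSpace α] {μ : Measure α} [NullSingletonClass μ]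
  (f : α → ℝ≥0∞)

theorem lintegral_eq_setLIntegral_Iio_add_Ioi (a : α) :
    ∫⁻ x, f x ∂μ = ∫⁻ x in Iio a, f x ∂μ + ∫⁻ x in Ioi a, f x ∂μ := by
  rw [← lintegral_add_compl f measurableSet_Iio, compl_Iio, setLIntegral_congr Ioi_ae_eq_Ici]

theorem setLIntegral_Ioi_eq_Ioo_add_Ioi {a b : α} (hab : a < b) :
    ∫⁻ x in Ioi a, f x ∂μ = ∫⁻ x in Ioo a b, f x ∂μ + ∫⁻ x in Ioi b, f x ∂μ := by
  rw [← Ioo_union_Ici_eq_Ioi hab,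
    lintegral_union measurableSet_Ici ((Iio_disjoint_Ici le_rfl).mono_left Ioo_subset_Iio_self),
    setLIntegral_congr Ioi_ae_eq_Ici]

theorem setLIntegral_Iio_eq_Iio_add_Ioo {a b : α} (hab : a ≤ b) :
    ∫⁻ x in Iio b, f x ∂μ = ∫⁻ x in Iio a, f x ∂μ + ∫⁻ x in Ioo a b, f x ∂μ := by
  rw [← Iio_union_Ico_eq_Iio hab,
    lintegral_union measurableSet_Ico ((Iio_disjoint_Ici le_rfl).mono_right Ico_subset_Ici_self),
    setLIntegral_congr Ioo_ae_eq_Ico]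

end IntervalSplitting

theorem setLIntegral_image_ofReal_mul_eq_const_mul {s : Set ℝ} {f f' w : ℝ → ℝ}
    (hs : MeasurableSet s) (hf' : ∀ x ∈ s, HasDerivWithinAt f (f' x) s x) (hf : InjOn f s)
    {C : ℝ} (hw : ∀ x ∈ s, |f' x| * w (f x) = C) (g : ℝ → ℝ≥0∞) :
    ∫⁻ x in f '' s, ENNReal.ofReal (w x) * g x = ENNReal.ofReal C * ∫⁻ x in s, g (f x) := by
  rw [lintegral_image_eq_lintegral_abs_deriv_mul hs hf' hf,
    ← lintegral_const_mul' _ _ ENNReal.ofReal_ne_top]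
  refine setLIntegral_congr_fun hs fun x hx => ?_
  rw [← mul_assoc, ← ENNReal.ofReal_mul (abs_nonneg _), hw x hx]

theorem Real.sq_rpow_neg_half (a : ℝ) : (a ^ 2) ^ (-(1 / 2) : ℝ) = |a|⁻¹ := by
  rw [rpow_neg (sq_nonneg a), ← sqrt_eq_rpow, sqrt_sq_eq_abs]

theorem image_sq_Ioi_zero : (fun u : ℝ => u ^ 2) '' Ioi 0 = Ioi 0 := by
  refine Subset.antisymm (image_subset_iff.2 fun u hu => pow_pos (mem_Ioi.1 hu) 2) fun ξ hξ => ?_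
  exact ⟨√ξ, sqrt_pos.2 hξ, sq_sqrt (le_of_lt hξ)⟩

theorem injOn_sq_Ioi_zero : InjOn (fun u : ℝ => u ^ 2) (Ioi 0) :=
  ((pow_left_strictMonoOn₀ two_ne_zero).mono fun _ hu => le_of_lt hu).injOn

theorem image_neg_sq_Ioi_zero : (fun u : ℝ => -u ^ 2) '' Ioi 0 = Iio 0 :=
  (image_comp Neg.neg (fun u : ℝ => u ^ 2) (Ioi 0)).trans
    (by rw [image_sq_Ioi_zero, image_neg_Ioi, neg_zero])

theorem lintegral_abs_rpow_neg_half_mul (h : ℝ → ℝ≥0∞) :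
    ∫⁻ ξ, ENNReal.ofReal (|ξ| ^ (-(1 / 2) : ℝ)) * h ξ
      = 2 * (∫⁻ u in Ioi 0, h (u ^ 2)) + 2 * ∫⁻ u in Ioi 0, h (-u ^ 2) := by
  have hw : ∀ u ∈ Ioi (0 : ℝ), |2 * u| * |u ^ 2| ^ (-(1 / 2) : ℝ) = 2 := fun u hu => by
    rw [abs_sq, Real.sq_rpow_neg_half, abs_mul, abs_two, mul_assoc,
      mul_inv_cancel₀ (abs_ne_zero.2 (mem_Ioi.1 hu).ne'), mul_one]
  have hsq := setLIntegral_image_ofReal_mul_eq_const_mul (w := fun ξ => |ξ| ^ (-(1 / 2) : ℝ))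
    (f' := fun u => 2 * u) measurableSet_Ioi
    (fun u _ => ((hasDerivAt_pow 2 u).congr_deriv (by ring)).hasDerivWithinAt) injOn_sq_Ioi_zero
    hw h
  have hneg := setLIntegral_image_ofReal_mul_eq_const_mul (w := fun ξ => |ξ| ^ (-(1 / 2) : ℝ))
    (f := fun u => -u ^ 2) (f' := fun u => -(2 * u)) measurableSet_Ioi
    (fun u _ => ((hasDerivAt_pow 2 u).neg.congr_deriv (by ring)).hasDerivWithinAt)
    (neg_injective.comp_injOn injOn_sq_Ioi_zero)
    (fun u hu => by simpa only [abs_neg] using hw u hu) h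
  rw [image_sq_Ioi_zero] at hsq
  rw [image_neg_sq_Ioi_zero] at hneg
  rw [lintegral_eq_setLIntegral_Iio_add_Ioi _ 0, add_comm, hsq, hneg, ENNReal.ofReal_ofNat]

theorem quarter_add_mul_quadratic (c u : ℝ) :
    1 / 4 + c * (u + c * u ^ 2) = (1 / 2 + c * u) ^ 2 := by
  ring

section Quadratic

variable {c : ℝ}

theorem quadratic_div_eq_of_sq_eq {s ζ : ℝ} (hc : c ≠ 0) (hs : s ^ 2 = 1 / 4 + c * ζ) :
    (s - 1 / 2) / c + c * ((s - 1 / 2) / c) ^ 2 = ζ := by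
  field_simp
  linear_combination 4 * hs

theorem setLIntegral_image_quadratic {s : Set ℝ} (hs : MeasurableSet s)
    (hsign : ∀ u ∈ s, ∀ v ∈ s, 0 < (1 + 2 * c * u) * (1 + 2 * c * v)) (g : ℝ → ℝ≥0∞) :
    ∫⁻ ζ in (fun u => u + c * u ^ 2) '' s,
        g ζ * ENNReal.ofReal ((1 / 4 + c * ζ) ^ (-(1 / 2) : ℝ))
      = 2 * ∫⁻ u in s, g (u + c * u ^ 2) := by
  have hinj : InjOn (fun u => u + c * u ^ 2) s := fun a ha b hb hab => by
    have hfactor : (a - b) * (1 + c * (a + b)) = 0 := by linear_combination hab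
    have hsum : 1 + c * (a + b) ≠ 0 := fun h => by
      have hb' : 1 + 2 * c * b = -(1 + 2 * c * a) := by linear_combination 2 * h
      have hab' := hsign a ha b hb
      rw [hb'] at hab'
      nlinarith [sq_nonneg (1 + 2 * c * a)]
    linarith [(mul_eq_zero.1 hfactor).resolve_right hsum]
  have hw : ∀ u ∈ s, |1 + 2 * c * u| * (1 / 4 + c * (u + c * u ^ 2)) ^ (-(1 / 2) : ℝ) = 2 :=
    fun u hu => by
      have hne : 1 / 2 + c * u ≠ 0 := fun h => by nlinarith [hsign u hu u hu]
      rw [quarter_add_mul_quadratic, Real.sq_rpow_neg_half,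
        show 1 + 2 * c * u = 2 * (1 / 2 + c * u) by ring, abs_mul, abs_two, mul_assoc,
        mul_inv_cancel₀ (abs_ne_zero.2 hne), mul_one]
  have hderiv : ∀ u ∈ s, HasDerivWithinAt (fun u => u + c * u ^ 2) (1 + 2 * c * u) s u :=
    fun u _ => ((hasDerivAt_id' u).add ((hasDerivAt_pow 2 u).const_mul c)).congr_deriv
      (by ring) |>.hasDerivWithinAt
  simp_rw [mul_comm (g _)]
  rw [setLIntegral_image_ofReal_mul_eq_const_mul hs hderiv hinj hw, ENNReal.ofReal_ofNat]

theorem image_quadratic_Ioi_zero (hc : 0 < c) : (fun u => u + c * u ^ 2) '' Ioi 0 = Ioi 0 := by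
  refine Subset.antisymm (image_subset_iff.2 fun u (hu : 0 < u) =>
    show 0 < u + c * u ^ 2 by positivity) ?_
  intro ζ (hζ : 0 < ζ)
  have hs : √(1 / 4 + c * ζ) ^ 2 = 1 / 4 + c * ζ := sq_sqrt (by positivity)
  have hhalf : 1 / 2 < √(1 / 4 + c * ζ) := (lt_sqrt (by norm_num)).2 (by nlinarith)
  exact ⟨_, div_pos (by linarith) hc, quadratic_div_eq_of_sq_eq hc.ne' hs⟩

theorem image_neg_quadratic_Ioo {y : ℝ} (hy : 0 < y) :
    (fun u => u + -y * u ^ 2) '' Ioo 0 (1 / (2 * y)) = Ioo 0 (1 / (4 * y)) := by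
  refine Subset.antisymm (image_subset_iff.2 fun u ⟨hu₀, hu₁⟩ => ?_) fun ζ ⟨hζ₀, hζ₁⟩ => ?_
  · rw [lt_div_iff₀ (by positivity)] at hu₁
    refine ⟨by nlinarith, (lt_div_iff₀ (by positivity)).2 ?_⟩
    nlinarith [sq_pos_of_pos (by linarith : 0 < 1 - 2 * y * u)]
  · rw [lt_div_iff₀ (by positivity)] at hζ₁
    have hs : √(1 / 4 + -y * ζ) ^ 2 = 1 / 4 + -y * ζ := sq_sqrt (by nlinarith)
    have hs₀ : 0 < √(1 / 4 + -y * ζ) := sqrt_pos.2 (by nlinarith)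
    have hs₁ : √(1 / 4 + -y * ζ) < 1 / 2 := (sqrt_lt' (by norm_num)).2 (by nlinarith)
    refine ⟨_, ⟨div_pos_of_neg_of_neg (by linarith) (by linarith), ?_⟩,
      quadratic_div_eq_of_sq_eq (neg_ne_zero.2 hy.ne') hs⟩
    rw [lt_div_iff₀ (by positivity), div_mul_eq_mul_div, div_lt_one_of_neg (by linarith)]
    nlinarith [mul_pos hy hs₀]

theorem image_neg_quadratic_Ioi {y : ℝ} (hy : 0 < y) :
    (fun u => u + -y * u ^ 2) '' Ioi (1 / (2 * y)) = Iio (1 / (4 * y)) := by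
  refine Subset.antisymm (image_subset_iff.2 fun u hu => ?_) fun ζ hζ => ?_
  · rw [mem_Ioi, div_lt_iff₀ (by positivity)] at hu
    show u + -y * u ^ 2 < 1 / (4 * y)
    rw [lt_div_iff₀ (by positivity)]
    nlinarith [sq_pos_of_pos (by linarith : 0 < 2 * y * u - 1)]
  · rw [mem_Iio, lt_div_iff₀ (by positivity)] at hζ
    have hs : (-√(1 / 4 + -y * ζ)) ^ 2 = 1 / 4 + -y * ζ := by
      rw [neg_sq, sq_sqrt (by nlinarith)]
    have hs₀ : 0 < √(1 / 4 + -y * ζ) := sqrt_pos.2 (by nlinarith)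
    refine ⟨_, ?_, quadratic_div_eq_of_sq_eq (neg_ne_zero.2 hy.ne') hs⟩
    rw [mem_Ioi, div_lt_iff₀ (by positivity), div_mul_eq_mul_div,
      lt_div_iff_of_neg (by linarith)]
    nlinarith [mul_pos hy hs₀]

end Quadratic

theorem two_mul_setLIntegral_Ioi_comp_quadratic {y : ℝ} (hy : 0 < y) (g : ℝ → ℝ≥0∞) :
    2 * ∫⁻ u in Ioi 0, g (u + y * u ^ 2)
      = ∫⁻ ζ in Ioi 0, g ζ * ENNReal.ofReal ((1 / 4 + y * ζ) ^ (-(1 / 2) : ℝ)) := by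
  rw [← setLIntegral_image_quadratic measurableSet_Ioi
    (fun u (hu : 0 < u) v (hv : 0 < v) => by positivity) g, image_quadratic_Ioi_zero hy]

theorem two_mul_setLIntegral_Ioi_comp_neg_quadratic {y : ℝ} (hy : 0 < y) (g : ℝ → ℝ≥0∞) :
    2 * ∫⁻ u in Ioi 0, g (u - y * u ^ 2)
      = (∫⁻ ζ in Ioo 0 (1 / (4 * y)), g ζ * ENNReal.ofReal ((1 / 4 - y * ζ) ^ (-(1 / 2) : ℝ)))
        + ∫⁻ ζ in Iio (1 / (4 * y)), g ζ * ENNReal.ofReal ((1 / 4 - y * ζ) ^ (-(1 / 2) : ℝ)) := by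
  have hlt : ∀ u, u < 1 / (2 * y) → 0 < 1 + 2 * -y * u := fun u hu => by
    rw [lt_div_iff₀ (by positivity)] at hu; linarith
  have hgt : ∀ u, 1 / (2 * y) < u → 1 + 2 * -y * u < 0 := fun u hu => by
    rw [div_lt_iff₀ (by positivity)] at hu; linarith
  simp only [sub_eq_add_neg, ← neg_mul]
  rw [setLIntegral_Ioi_eq_Ioo_add_Ioi _ (by positivity : (0 : ℝ) < 1 / (2 * y)), mul_add,
    ← setLIntegral_image_quadratic measurableSet_Ioo
      (fun u hu v hv => mul_pos (hlt u hu.2) (hlt v hv.2)) g,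
    ← setLIntegral_image_quadratic measurableSet_Ioi
      (fun u hu v hv => mul_pos_of_neg_of_neg (hgt u hu) (hgt v hv)) g,
    image_neg_quadratic_Ioo hy, image_neg_quadratic_Ioi hy]

theorem lintegral_abs_rpow_neg_half_mul_comp_phase (y : ℝ) (g : ℝ → ℝ≥0∞) :
    ∫⁻ ξ, ENNReal.ofReal (|ξ| ^ (-(1 / 2) : ℝ)) * g (y * ξ + |ξ| ^ ((1 : ℝ) / 2))
      = 2 * (∫⁻ u in Ioi 0, g (u + y * u ^ 2)) + 2 * ∫⁻ u in Ioi 0, g (u - y * u ^ 2) := by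
  have hroot : ∀ u : ℝ, 0 < u → |u ^ 2| ^ ((1 : ℝ) / 2) = u := fun u hu => by
    rw [abs_sq, ← sqrt_eq_rpow, sqrt_sq hu.le]
  rw [lintegral_abs_rpow_neg_half_mul]
  congr 2 <;> refine setLIntegral_congr_fun measurableSet_Ioi fun u (hu : 0 < u) => ?_
  · rw [hroot u hu, add_comm]
  · rw [abs_neg, hroot u hu, mul_neg, ← sub_eq_neg_add]

theorem lintegral_mul_ofReal_rpow_abs_eq_Iio_add_Ioi (y : ℝ) (g : ℝ → ℝ≥0∞) :
    ∫⁻ ζ, g ζ * ENNReal.ofReal ((1 / 4 + y * |ζ|) ^ (-(1 / 2) : ℝ))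
      = (∫⁻ ζ in Iio 0, g ζ * ENNReal.ofReal ((1 / 4 - y * ζ) ^ (-(1 / 2) : ℝ)))
        + ∫⁻ ζ in Ioi 0, g ζ * ENNReal.ofReal ((1 / 4 + y * ζ) ^ (-(1 / 2) : ℝ)) := by
  rw [lintegral_eq_setLIntegral_Iio_add_Ioi _ 0]
  congr 1
  · refine setLIntegral_congr_fun measurableSet_Iio fun ζ (hζ : ζ < 0) => ?_
    rw [abs_of_neg hζ, mul_neg, ← sub_eq_add_neg]
  · refine setLIntegral_congr_fun measurableSet_Ioi fun ζ (hζ : 0 < ζ) => ?_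
    rw [abs_of_pos hζ]

theorem change_of_variables_identity_a_half_general (y : ℝ) (hy : 0 < y)
    (F : ℝ → ℂ) :
    (∫⁻ ξ : ℝ, ENNReal.ofReal (|ξ| ^ (-(1/2) : ℝ)) *
        (‖F (y * ξ + |ξ| ^ ((1:ℝ)/2))‖₊ : ℝ≥0∞) ^ 2)
      = (∫⁻ ζ : ℝ, (‖F ζ‖₊ : ℝ≥0∞) ^ 2 *
            ENNReal.ofReal ((1/4 + y * |ζ|) ^ (-(1/2) : ℝ)))
        + 2 * ∫⁻ ζ in Set.Ioo (0:ℝ) (1/(4*y)),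
            (‖F ζ‖₊ : ℝ≥0∞) ^ 2 * ENNReal.ofReal ((1/4 - y * ζ) ^ (-(1/2) : ℝ)) := by
  set G : ℝ → ℝ≥0∞ := fun ζ => (‖F ζ‖₊ : ℝ≥0∞) ^ 2
  rw [lintegral_abs_rpow_neg_half_mul_comp_phase y G,
    two_mul_setLIntegral_Ioi_comp_quadratic hy, two_mul_setLIntegral_Ioi_comp_neg_quadratic hy,
    lintegral_mul_ofReal_rpow_abs_eq_Iio_add_Ioi y G,
    setLIntegral_Iio_eq_Iio_add_Ioo _ (by positivity : (0 : ℝ) ≤ 1 / (4 * y))]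
  ring

/-- exact change-of-variables identity for the water-wave phase
`yξ + |ξ|^{1/2}` (case `a = 1/2`), as an equality in `[0,∞]`. -/
theorem change_of_variables_identity_a_half (y : ℝ) (hy : 0 < y)
    (F : ℝ → ℂ) (hF : Measurable F) :
    (∫⁻ ξ : ℝ, ENNReal.ofReal (|ξ| ^ (-(1/2) : ℝ)) *
        (‖F (y * ξ + |ξ| ^ ((1:ℝ)/2))‖₊ : ℝ≥0∞) ^ 2)
      = (∫⁻ ζ : ℝ, (‖F ζ‖₊ : ℝ≥0∞) ^ 2 *
            ENNReal.ofReal ((1/4 + y * |ζ|) ^ (-(1/2) : ℝ)))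
        + 2 * ∫⁻ ζ in Set.Ioo (0:ℝ) (1/(4*y)),
            (‖F ζ‖₊ : ℝ≥0∞) ^ 2 * ENNReal.ofReal ((1/4 - y * ζ) ^ (-(1/2) : ℝ)) :=
  change_of_variables_identity_a_half_general y hy F
end

section
/- There is an absolute constant C>0 such that for every x∈ℝ with x≠0, the improper integral k(x) := lim_{R→∞} 2∫_0^R e^{iζ}( e^{i x ζ²} − e^{−i x ζ²} ) dζ exists and satisfies |k(x)| ≤ C·|x|^{-1/2}. -/
/-! Writing `e^{iζ}(e^{ixζ²} - e^{-ixζ²}) = e^{i(xζ² + ζ)} - e^{i(-xζ² + ζ)}` reduces the claim to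
partial integrals of `e^{i(aζ² + bζ)}` with `a ≠ 0`, and complex conjugation reduces these to
`a > 0`. Completing the square and substituting `v = √a ζ + b / (2√a)` turns them into
`a^{-1/2}` times differences of partial Fresnel integrals `F(T) = ∫₀ᵀ e^{iv²} dv`. One integration
by parts on `[1, T]`, against `d/dt (e^{it²} / (2it)) = e^{it²} - e^{it²} / (2it²)`, shows that `F`
converges at infinity and is bounded by `3`, whence the constant `2 · (6 + 6) = 24`. -/

open MeasureTheory Filter Complex intervalIntegral Set Topology
open scoped ComplexConjugate

theorem norm_intervalIntegral_le_integral_Ioi {E : Type*} [NormedAddCommGroup E]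
    [NormedSpace ℝ E] {f : ℝ → E} {g : ℝ → ℝ} {a T : ℝ} (hT : a ≤ T)
    (hg : IntegrableOn g (Ioi a)) (hfg : ∀ t ∈ Ioi a, ‖f t‖ ≤ g t) :
    ‖∫ t in a..T, f t‖ ≤ ∫ t in Ioi a, g t := by
  rw [integral_of_le hT]
  calc ‖∫ t in Ioc a T, f t‖ ≤ ∫ t in Ioc a T, g t :=
        norm_integral_le_of_norm_le (hg.mono_set Ioc_subset_Ioi_self)
          ((ae_restrict_mem measurableSet_Ioc).mono fun t ht => hfg t ht.1)
    _ ≤ ∫ t in Ioi a, g t :=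
        setIntegral_mono_set hg
          ((ae_restrict_mem measurableSet_Ioi).mono fun t ht => (norm_nonneg _).trans (hfg t ht))
          Ioc_subset_Ioi_self.eventuallyLE

lemma continuous_cexp_I_mul_sq : Continuous fun v : ℝ => cexp (I * ↑(v ^ 2)) := by fun_prop

noncomputable def fresnelIntegral (T : ℝ) : ℂ := ∫ v in (0:ℝ)..T, cexp (I * ↑(v ^ 2))

noncomputable def fresnelBoundary (t : ℝ) : ℂ := cexp (I * ↑(t ^ 2)) / (2 * I * t)

noncomputable def fresnelRemainder (t : ℝ) : ℂ := cexp (I * ↑(t ^ 2)) / (2 * I * ↑(t ^ 2))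

lemma fresnelIntegral_neg (T : ℝ) : fresnelIntegral (-T) = -fresnelIntegral T := by
  have h := integral_comp_neg (a := 0) (b := T) fun v : ℝ => cexp (I * ↑(v ^ 2))
  simp only [neg_sq, neg_zero] at h
  rw [fresnelIntegral, integral_symm, ← h]
  rfl

lemma norm_fresnelIntegral_le_abs (T : ℝ) : ‖fresnelIntegral T‖ ≤ |T| := by
  have h := norm_integral_le_of_norm_le_const (a := 0) (b := T) (C := 1)
    fun v _ => (norm_exp_I_mul_ofReal (v ^ 2)).le
  rwa [sub_zero, one_mul] at h

lemma hasDerivAt_fresnelBoundary {t : ℝ} (ht : t ≠ 0) :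
    HasDerivAt fresnelBoundary (cexp (I * ↑(t ^ 2)) - fresnelRemainder t) t := by
  have hphase : HasDerivAt (fun s : ℝ => cexp (I * ↑(s ^ 2)))
      (cexp (I * ↑(t ^ 2)) * (I * ↑(2 * t))) t := by
    simpa using ((hasDerivAt_pow 2 t).ofReal_comp.const_mul I).cexp
  have hden : HasDerivAt (fun s : ℝ => 2 * I * (s : ℂ)) (2 * I) t := by
    simpa using (hasDerivAt_id t).ofReal_comp.const_mul (2 * I)
  have hne : 2 * I * (t : ℂ) ≠ 0 := by simp [ht]
  have ht' : (t : ℂ) ≠ 0 := ofReal_ne_zero.2 ht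
  refine (hphase.div hden hne).congr_deriv ?_
  simp only [fresnelRemainder]
  push_cast
  field_simp

lemma continuousOn_fresnelRemainder : ContinuousOn fresnelRemainder {0}ᶜ := by
  intro t ht
  have : (t : ℂ) ≠ 0 := by simpa using ht
  unfold fresnelRemainder
  fun_prop (disch := simp [this])

lemma fresnelIntegral_eq_add_boundary_add_remainder {T : ℝ} (hT : 1 ≤ T) :
    fresnelIntegral T = fresnelIntegral 1 + (fresnelBoundary T - fresnelBoundary 1)
      + ∫ t in (1:ℝ)..T, fresnelRemainder t := by
  have hpos : ∀ t ∈ uIcc 1 T, t ≠ 0 := fun t ht => by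
    rw [uIcc_of_le hT] at ht; linarith [ht.1]
  have hrem : IntervalIntegrable fresnelRemainder volume 1 T :=
    (continuousOn_fresnelRemainder.mono fun t ht => hpos t ht).intervalIntegrable
  have hftc := integral_eq_sub_of_hasDerivAt (fun t ht => hasDerivAt_fresnelBoundary (hpos t ht))
    ((continuous_cexp_I_mul_sq.intervalIntegrable 1 T).sub hrem)
  rw [integral_sub (continuous_cexp_I_mul_sq.intervalIntegrable 1 T) hrem] at hftc
  simp only [fresnelIntegral]
  rw [← integral_add_adjacent_intervals (continuous_cexp_I_mul_sq.intervalIntegrable 0 1)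
    (continuous_cexp_I_mul_sq.intervalIntegrable 1 T), ← hftc]
  ring

lemma norm_fresnelBoundary (t : ℝ) : ‖fresnelBoundary t‖ = (2 * |t|)⁻¹ := by
  simp only [fresnelBoundary, norm_div, norm_exp_I_mul_ofReal, norm_mul, Complex.norm_ofNat, norm_I,
    norm_real, Real.norm_eq_abs, mul_one, one_div]

lemma norm_fresnelRemainder_le {t : ℝ} (ht : 0 < t) : ‖fresnelRemainder t‖ ≤ t ^ (-2 : ℝ) := by
  rw [Real.rpow_neg ht.le, Real.rpow_two]
  simp only [fresnelRemainder, norm_div, norm_exp_I_mul_ofReal, norm_mul, Complex.norm_ofNat,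
    norm_I, norm_real, Real.norm_of_nonneg (sq_nonneg t), mul_one, one_div]
  gcongr
  linarith [sq_nonneg t]

lemma integrableOn_fresnelRemainder : IntegrableOn fresnelRemainder (Ioi 1) := by
  refine Integrable.mono' (integrableOn_Ioi_rpow_of_lt (by norm_num : (-2:ℝ) < -1) one_pos) ?_ ?_
  · exact (continuousOn_fresnelRemainder.mono fun t (ht : 1 < t) =>
      (one_pos.trans ht).ne').aestronglyMeasurable measurableSet_Ioi
  · exact (ae_restrict_mem measurableSet_Ioi).mono fun t (ht : 1 < t) =>
      norm_fresnelRemainder_le (one_pos.trans ht)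

lemma norm_integral_fresnelRemainder_le {T : ℝ} (hT : 1 ≤ T) :
    ‖∫ t in (1:ℝ)..T, fresnelRemainder t‖ ≤ 1 := by
  have h := norm_intervalIntegral_le_integral_Ioi hT
    (integrableOn_Ioi_rpow_of_lt (by norm_num : (-2:ℝ) < -1) one_pos)
    fun t (ht : 1 < t) => norm_fresnelRemainder_le (one_pos.trans ht)
  rw [integral_Ioi_rpow_of_lt (by norm_num) one_pos, Real.one_rpow] at h
  norm_num at h
  exact h

lemma norm_fresnelIntegral_le (T : ℝ) : ‖fresnelIntegral T‖ ≤ 3 := by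
  wlog hT : 0 ≤ T
  · simpa [fresnelIntegral_neg] using this (-T) (by linarith)
  rcases le_total T 1 with hT1 | hT1
  · linarith [norm_fresnelIntegral_le_abs T, abs_of_nonneg hT]
  have hB : ∀ t, 1 ≤ t → ‖fresnelBoundary t‖ ≤ 1 / 2 := fun t ht => by
    rw [norm_fresnelBoundary, abs_of_pos (by linarith)]
    rw [inv_le_comm₀ (by linarith) (by norm_num)]
    linarith
  rw [fresnelIntegral_eq_add_boundary_add_remainder hT1]
  calc _ ≤ ‖fresnelIntegral 1‖ + (‖fresnelBoundary T‖ + ‖fresnelBoundary 1‖)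
        + ‖∫ t in (1:ℝ)..T, fresnelRemainder t‖ :=
        norm_add₃_le.trans (by gcongr; exact norm_sub_le _ _)
    _ ≤ 1 + (1 / 2 + 1 / 2) + 1 := by
        gcongr
        · simpa using norm_fresnelIntegral_le_abs 1
        · exact hB T hT1
        · exact hB 1 le_rfl
        · exact norm_integral_fresnelRemainder_le hT1
    _ = 3 := by norm_num

lemma tendsto_fresnelBoundary_atTop : Tendsto fresnelBoundary atTop (𝓝 0) := by
  rw [tendsto_zero_iff_norm_tendsto_zero]
  simp only [norm_fresnelBoundary]
  exact tendsto_inv_atTop_zero.comp (tendsto_abs_atTop_atTop.const_mul_atTop two_pos)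

lemma exists_tendsto_fresnelIntegral : ∃ L, Tendsto fresnelIntegral atTop (𝓝 L) := by
  have hlim := ((tendsto_const_nhds (x := fresnelIntegral 1)).add
    (tendsto_fresnelBoundary_atTop.sub (tendsto_const_nhds (x := fresnelBoundary 1)))).add
    (intervalIntegral_tendsto_integral_Ioi 1 integrableOn_fresnelRemainder tendsto_id)
  refine ⟨_, hlim.congr' ?_⟩
  filter_upwards [eventually_ge_atTop 1] with T hT
  exact (fresnelIntegral_eq_add_boundary_add_remainder hT).symm

noncomputable def quadraticPhaseIntegral (a b R : ℝ) : ℂ :=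
  ∫ ζ in (0:ℝ)..R, cexp (I * ↑(a * ζ ^ 2 + b * ζ))

lemma quadraticPhaseIntegral_eq {a : ℝ} (ha : 0 < a) (b R : ℝ) :
    quadraticPhaseIntegral a b R = (√a)⁻¹ • (cexp (-(I * (b ^ 2 / (4 * a) : ℝ))) *
      (fresnelIntegral (√a * R + b / (2 * √a)) - fresnelIntegral (b / (2 * √a)))) := by
  set s := √a
  set d := b / (2 * s)
  have hs0 : 0 < s := Real.sqrt_pos.2 ha
  have hphase : ∀ ζ : ℝ, cexp (I * ↑(a * ζ ^ 2 + b * ζ))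
      = cexp (-(I * (b ^ 2 / (4 * a) : ℝ))) * cexp (I * ↑((s * ζ + d) ^ 2)) := fun ζ => by
    have hsq : s ^ 2 = a := Real.sq_sqrt ha.le
    have hsquare : a * ζ ^ 2 + b * ζ = (s * ζ + d) ^ 2 - d ^ 2 := by
      simp only [d]; field_simp; rw [hsq]; ring
    have hd : d ^ 2 = b ^ 2 / (4 * a) := by
      simp only [d]; rw [div_pow, mul_pow, hsq]; ring
    rw [← Complex.exp_add, hsquare, ← hd]
    push_cast
    ring_nf
  simp only [quadraticPhaseIntegral, hphase, intervalIntegral.integral_const_mul,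
    integral_comp_mul_add (fun v : ℝ => cexp (I * ↑(v ^ 2))) hs0.ne', mul_zero, zero_add]
  rw [← integral_interval_sub_left (continuous_cexp_I_mul_sq.intervalIntegrable _ _)
    (continuous_cexp_I_mul_sq.intervalIntegrable _ _), mul_smul_comm]
  rfl

lemma norm_quadraticPhaseIntegral_le_of_pos {a : ℝ} (ha : 0 < a) (b R : ℝ) :
    ‖quadraticPhaseIntegral a b R‖ ≤ 6 * a ^ (-(1 / 2) : ℝ) := by
  have hs : ‖(√a)⁻¹‖ = a ^ (-(1 / 2) : ℝ) := by
    rw [norm_inv, Real.norm_of_nonneg (Real.sqrt_nonneg a), Real.sqrt_eq_rpow, Real.rpow_neg ha.le]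
  rw [quadraticPhaseIntegral_eq ha, norm_smul, norm_mul, ← mul_neg, ← ofReal_neg,
    norm_exp_I_mul_ofReal, one_mul, hs, mul_comm]
  gcongr
  linarith [norm_sub_le (fresnelIntegral (√a * R + b / (2 * √a))) (fresnelIntegral (b / (2 * √a))),
    norm_fresnelIntegral_le (√a * R + b / (2 * √a)), norm_fresnelIntegral_le (b / (2 * √a))]

lemma exists_tendsto_quadraticPhaseIntegral_of_pos {a : ℝ} (ha : 0 < a) (b : ℝ) :
    ∃ K, Tendsto (quadraticPhaseIntegral a b) atTop (𝓝 K) := by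
  obtain ⟨L, hL⟩ := exists_tendsto_fresnelIntegral
  have harg : Tendsto (fun R => √a * R + b / (2 * √a)) atTop atTop :=
    tendsto_atTop_add_const_right _ _ (tendsto_id.const_mul_atTop (Real.sqrt_pos.2 ha))
  exact ⟨_, ((((hL.comp harg).sub tendsto_const_nhds).const_mul _).const_smul _).congr
    fun R => (quadraticPhaseIntegral_eq ha b R).symm⟩

lemma quadraticPhaseIntegral_neg (a b R : ℝ) :
    quadraticPhaseIntegral (-a) (-b) R = conj (quadraticPhaseIntegral a b R) := by
  rw [quadraticPhaseIntegral, quadraticPhaseIntegral, ← intervalIntegral_conj]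
  refine integral_congr fun ζ _ => ?_
  rw [← Complex.exp_conj, map_mul, conj_I, conj_ofReal]
  push_cast
  ring_nf

lemma norm_quadraticPhaseIntegral_le {a : ℝ} (ha : a ≠ 0) (b R : ℝ) :
    ‖quadraticPhaseIntegral a b R‖ ≤ 6 * |a| ^ (-(1 / 2) : ℝ) := by
  rcases ha.lt_or_gt with ha | ha
  · have h := quadraticPhaseIntegral_neg (-a) (-b) R
    rw [neg_neg, neg_neg] at h
    rw [h, RCLike.norm_conj, abs_of_neg ha]
    exact norm_quadraticPhaseIntegral_le_of_pos (neg_pos.2 ha) (-b) R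
  · rw [abs_of_pos ha]
    exact norm_quadraticPhaseIntegral_le_of_pos ha b R

lemma exists_tendsto_quadraticPhaseIntegral {a : ℝ} (ha : a ≠ 0) (b : ℝ) :
    ∃ K, Tendsto (quadraticPhaseIntegral a b) atTop (𝓝 K) := by
  rcases ha.lt_or_gt with ha | ha
  · obtain ⟨K, hK⟩ := exists_tendsto_quadraticPhaseIntegral_of_pos (neg_pos.2 ha) (-b)
    refine ⟨conj K, ((continuous_conj.tendsto K).comp hK).congr fun R => ?_⟩
    simpa using (quadraticPhaseIntegral_neg (-a) (-b) R).symm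
  · exact exists_tendsto_quadraticPhaseIntegral_of_pos ha b

lemma setIntegral_Ioc_kernel_eq (x : ℝ) {R : ℝ} (hR : 0 ≤ R) :
    (∫ ζ in Ioc (0:ℝ) R, cexp (I * ζ) * (cexp (I * ↑(x * ζ ^ 2)) - cexp (-(I * ↑(x * ζ ^ 2)))))
      = quadraticPhaseIntegral x 1 R - quadraticPhaseIntegral (-x) 1 R := by
  rw [← integral_of_le hR, quadraticPhaseIntegral, quadraticPhaseIntegral,
    ← intervalIntegral.integral_sub ((by fun_prop : Continuous _).intervalIntegrable _ _)
      ((by fun_prop : Continuous _).intervalIntegrable _ _)]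
  refine integral_congr fun ζ _ => ?_
  simp only [mul_sub, ← Complex.exp_add]
  push_cast
  ring_nf

/-- the Fresnel-type kernel
`k(x) = lim_{R→∞} 2∫_0^R e^{iζ}(e^{ixζ²} − e^{−ixζ²}) dζ` exists for `x ≠ 0`
and satisfies `|k(x)| ≤ C|x|^{-1/2}`. -/
theorem fresnel_kernel_bound :
    ∃ C : ℝ, 0 < C ∧
      ∀ x : ℝ, x ≠ 0 →
        ∃ k : ℂ,
          Tendsto (fun R : ℝ => (2 : ℂ) * ∫ ζ in Set.Ioc (0:ℝ) R,
              Complex.exp (Complex.I * (ζ : ℂ)) *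
                (Complex.exp (Complex.I * ((x * ζ^2 : ℝ) : ℂ))
                  - Complex.exp (-(Complex.I * ((x * ζ^2 : ℝ) : ℂ)))))
            atTop (nhds k)
          ∧ ‖k‖ ≤ C * |x| ^ (-(1/2) : ℝ) := by
  refine ⟨24, by norm_num, fun x hx => ?_⟩
  obtain ⟨Kpos, hKpos⟩ := exists_tendsto_quadraticPhaseIntegral hx 1
  obtain ⟨Kneg, hKneg⟩ := exists_tendsto_quadraticPhaseIntegral (neg_ne_zero.2 hx) 1
  have hlim := (hKpos.sub hKneg).const_mul 2
  refine ⟨2 * (Kpos - Kneg), hlim.congr' ?_, le_of_tendsto' hlim.norm fun R => ?_⟩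
  · filter_upwards [eventually_ge_atTop 0] with R hR
    rw [setIntegral_Ioc_kernel_eq x hR]
  · calc ‖2 * (quadraticPhaseIntegral x 1 R - quadraticPhaseIntegral (-x) 1 R)‖
        ≤ 2 * (‖quadraticPhaseIntegral x 1 R‖ + ‖quadraticPhaseIntegral (-x) 1 R‖) := by
          rw [norm_mul, Complex.norm_two]; gcongr; exact norm_sub_le _ _
      _ ≤ 2 * (6 * |x| ^ (-(1 / 2) : ℝ) + 6 * |-x| ^ (-(1 / 2) : ℝ)) := by
          gcongr
          · exact norm_quadraticPhaseIntegral_le hx 1 R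
          · exact norm_quadraticPhaseIntegral_le (neg_ne_zero.2 hx) 1 R
      _ = 24 * |x| ^ (-(1 / 2) : ℝ) := by rw [abs_neg]; ring
end
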